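/- Let 0 < γ < 1 and T > 0. Then for every real s > 0 one has s/(1 − E_{γ,1}(−s T^γ)) ≤ s + Γ(1+γ)/T^γ. -/

import Mathlib

/-!
Write `u t = E_{γ,1}(-t^γ)`. Expanding the series and integrating term by term with the Beta
integral, the recursion `E_{γ,β}(z) = 1/Γ(β) + z E_{γ,β+γ}(z)` turns into the relaxation identity
`∫₀ᵗ (t-s)^{γ-1} u s ds = Γ(γ) (1 - u t)`. If `u` is nonincreasing, the left side is at least
`u t · t^γ / γ`, so `u t (Γ(1+γ) + t^γ) ≤ Γ(1+γ)`; with `t^γ = s T^γ` this rearranges to the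
bound.

The same computation gives `1 - u t = ∫₀ᵗ s^{γ-1} E_{γ,γ}(-s^γ) ds`, so `u` is nonincreasing once
`E_{γ,γ}(-x) > 0` for `x ≥ 0`. The function `h s = E_{γ,γ}(-s^γ)` solves the Volterra equation
`Γ(γ) h τ + τ^{1-γ} ∫₀^τ s^{γ-1} (τ-s)^{γ-1} h s ds = 1`, and for `γ ≤ 1` the kernel
`τ^{1-γ} (τ-s)^{γ-1}` decreases in `τ`. At a first zero `t₀` of `h` this bounds `Γ(γ) h τ` by the
integral of `h` against the kernel over `[τ, t₀]`, whose mass vanishes as `τ → t₀`; at the maximum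
of `h` near `t₀` this is impossible.
-/

/-- The real two-parameter Mittag-Leffler function
`E_{γ,β}(t) = ∑_{k=0}^∞ t^k / Γ(γ k + β)`. -/
noncomputable def mittagLeffler (γ β : ℝ) (t : ℝ) : ℝ :=
  ∑' k : ℕ, t ^ k / Real.Gamma (γ * k + β)

open MeasureTheory Set Filter

theorem Real.rpow_mul_Gamma_le_Gamma_add {a c : ℝ} (ha : 1 < a) (hc : 0 < c) :
    (a - 1) ^ c * Real.Gamma a ≤ Real.Gamma (a + c) := by
  have ha1 : 0 < a - 1 := by linarith
  have hΓa : 0 < Real.Gamma a := Real.Gamma_pos_of_pos (by linarith)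
  have hΓac : 0 < Real.Gamma (a + c) := Real.Gamma_pos_of_pos (by linarith)
  -- log-convexity of `Γ`: the slope of `log ∘ Γ` on `[a - 1, a]` is `log (a - 1)`
  have hslope := Real.convexOn_log_Gamma.slope_mono_adjacent (x := a - 1) (y := a) (z := a + c)
    (mem_Ioi.2 ha1) (mem_Ioi.2 (by linarith)) (by linarith) (by linarith)
  have hlog : Real.log (Real.Gamma a) - Real.log (Real.Gamma (a - 1)) = Real.log (a - 1) := by
    have hΓ := Real.Gamma_add_one ha1.ne'
    rw [sub_add_cancel] at hΓ
    rw [hΓ, Real.log_mul ha1.ne' (Real.Gamma_pos_of_pos ha1).ne', add_sub_cancel_right]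
  simp only [Function.comp_apply, sub_sub_cancel, add_sub_cancel_left, div_one, hlog] at hslope
  rw [le_div_iff₀ hc] at hslope
  rw [← Real.exp_log hΓac, Real.rpow_def_of_pos ha1, ← Real.exp_log hΓa, ← Real.exp_add]
  exact Real.exp_le_exp.2 (by linarith)

section MittagLeffler

variable {γ β : ℝ}

theorem summable_pow_div_Gamma_mul_add (hγ : 0 < γ) (hβ : 0 < β) (x : ℝ) :
    Summable (fun k : ℕ => x ^ k / Real.Gamma (γ * k + β)) := by
  have hlin : Tendsto (fun k : ℕ => γ * k + β - 1) atTop atTop :=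
    tendsto_atTop_add_const_right _ _ <| tendsto_atTop_add_const_right _ _ <|
      tendsto_natCast_atTop_atTop.const_mul_atTop hγ
  refine summable_of_ratio_norm_eventually_le (r := 1 / 2) (by norm_num) ?_
  filter_upwards [hlin.eventually_gt_atTop 0,
    ((tendsto_rpow_atTop hγ).comp hlin).eventually_ge_atTop (2 * |x|)] with k hk1 hkx
  set a := γ * k + β
  have hΓa : 0 < Real.Gamma a := Real.Gamma_pos_of_pos (by linarith)
  have hΓ : 2 * |x| * Real.Gamma a ≤ Real.Gamma (a + γ) :=
    (mul_le_mul_of_nonneg_right hkx hΓa.le).trans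
      (Real.rpow_mul_Gamma_le_Gamma_add (by linarith) hγ)
  have harg : γ * ((k + 1 : ℕ) : ℝ) + β = a + γ := by push_cast; ring
  rw [harg, norm_div, norm_div, norm_pow, norm_pow, pow_succ, Real.norm_eq_abs, Real.norm_eq_abs,
    Real.norm_eq_abs, abs_of_pos hΓa, abs_of_pos (Real.Gamma_pos_of_pos (by positivity)),
    div_le_iff₀ (Real.Gamma_pos_of_pos (by positivity))]
  calc |x| ^ k * |x| = 1 / 2 * (|x| ^ k / Real.Gamma a) * (2 * |x| * Real.Gamma a) := by
        field_simp
    _ ≤ 1 / 2 * (|x| ^ k / Real.Gamma a) * Real.Gamma (a + γ) :=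
        mul_le_mul_of_nonneg_left hΓ (by positivity)

theorem mittagLeffler_zero : mittagLeffler γ β 0 = 1 / Real.Gamma β := by
  rw [mittagLeffler, tsum_eq_single 0 (fun k hk => by simp [zero_pow hk])]
  simp

theorem mittagLeffler_eq_one_div_Gamma_add_mul (hγ : 0 < γ) (hβ : 0 < β) (z : ℝ) :
    mittagLeffler γ β z = 1 / Real.Gamma β + z * mittagLeffler γ (β + γ) z := by
  rw [mittagLeffler, (summable_pow_div_Gamma_mul_add hγ hβ z).tsum_eq_zero_add, mittagLeffler,
    ← tsum_mul_left]
  congr 1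
  · simp
  · refine tsum_congr fun j => ?_
    rw [show γ * ((j + 1 : ℕ) : ℝ) + β = γ * j + (β + γ) by push_cast; ring, pow_succ]
    ring

theorem continuous_mittagLeffler (hγ : 0 < γ) (hβ : 0 < β) :
    Continuous (mittagLeffler γ β) := by
  refine continuous_iff_continuousAt.2 fun x => ?_
  have hmem : Icc (-(|x| + 1)) (|x| + 1) ∈ nhds x :=
    Icc_mem_nhds (by linarith [neg_abs_le x]) (by linarith [le_abs_self x])
  refine ContinuousOn.continuousAt ?_ hmem
  refine continuousOn_tsum (fun k => ((continuous_pow k).div_const _).continuousOn)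
    (summable_pow_div_Gamma_mul_add hγ hβ (|x| + 1)) fun k y hy => ?_
  rw [norm_div, norm_pow, Real.norm_eq_abs,
    Real.norm_of_nonneg (Real.Gamma_pos_of_pos (by positivity)).le]
  gcongr
  exact abs_le.2 hy

end MittagLeffler

section Beta

variable {u v t : ℝ}

theorem integral_rpow_mul_one_sub_rpow (hu : 0 < u) (hv : 0 < v) :
    ∫ s in (0 : ℝ)..1, s ^ (u - 1) * (1 - s) ^ (v - 1)
      = Real.Gamma u * Real.Gamma v / Real.Gamma (u + v) := by
  have h := Complex.betaIntegral_eq_Gamma_mul_div u v (by simpa using hu) (by simpa using hv)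
  have hβ : Complex.betaIntegral u v
      = ((∫ s in (0 : ℝ)..1, s ^ (u - 1) * (1 - s) ^ (v - 1) : ℝ) : ℂ) := by
    rw [Complex.betaIntegral, ← intervalIntegral.integral_ofReal]
    refine intervalIntegral.integral_congr fun s hs => ?_
    rw [uIcc_of_le zero_le_one] at hs
    rw [Complex.ofReal_mul, Complex.ofReal_cpow hs.1, Complex.ofReal_cpow (sub_nonneg.2 hs.2)]
    push_cast
    rfl
  rw [hβ, ← Complex.ofReal_add, Complex.Gamma_ofReal, Complex.Gamma_ofReal,
    Complex.Gamma_ofReal] at h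
  exact_mod_cast h

theorem integral_rpow_mul_sub_rpow (hu : 0 < u) (hv : 0 < v) (ht : 0 < t) :
    ∫ s in (0 : ℝ)..t, s ^ (u - 1) * (t - s) ^ (v - 1)
      = Real.Gamma u * Real.Gamma v / Real.Gamma (u + v) * t ^ (u + v - 1) := by
  have hscale : ∀ x ∈ uIcc (0 : ℝ) 1, t * ((t * x) ^ (u - 1) * (t - t * x) ^ (v - 1))
      = t ^ (u + v - 1) * (x ^ (u - 1) * (1 - x) ^ (v - 1)) := by
    intro x hx
    rw [uIcc_of_le zero_le_one] at hx
    rw [show t - t * x = t * (1 - x) by ring, Real.mul_rpow ht.le hx.1,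
      Real.mul_rpow ht.le (by linarith [hx.2]),
      show u + v - 1 = 1 + (u - 1) + (v - 1) by ring, Real.rpow_add ht, Real.rpow_add ht,
      Real.rpow_one]
    ring
  have hsubst := intervalIntegral.integral_comp_mul_left
    (fun s => s ^ (u - 1) * (t - s) ^ (v - 1)) ht.ne' (a := 0) (b := 1)
  rw [mul_zero, mul_one, smul_eq_mul, eq_inv_mul_iff_mul_eq₀ ht.ne'] at hsubst
  rw [← hsubst, ← intervalIntegral.integral_const_mul, intervalIntegral.integral_congr hscale,
    intervalIntegral.integral_const_mul, integral_rpow_mul_one_sub_rpow hu hv]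
  ring

theorem intervalIntegrable_rpow_mul_sub_rpow (hu : 0 < u) (hv : 0 < v) (ht : 0 < t) :
    IntervalIntegrable (fun s => s ^ (u - 1) * (t - s) ^ (v - 1)) volume 0 t := by
  -- each factor is singular at one end only: split at `t / 2`
  have hleft : IntervalIntegrable (fun s => s ^ (u - 1) * (t - s) ^ (v - 1)) volume 0 (t / 2) := by
    refine (intervalIntegral.intervalIntegrable_rpow' (by linarith)).mul_continuousOn
      (ContinuousOn.rpow_const (by fun_prop) fun s hs => Or.inl ?_)
    rw [uIcc_of_le (by linarith)] at hs
    linarith [hs.2]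
  have hright : IntervalIntegrable (fun s => s ^ (u - 1) * (t - s) ^ (v - 1)) volume (t / 2) t := by
    have hker := ((intervalIntegral.intervalIntegrable_rpow' (by linarith : -1 < v - 1)
      (a := 0) (b := t / 2)).comp_sub_left t).symm
    rw [sub_zero, sub_half] at hker
    refine hker.continuousOn_mul (ContinuousOn.rpow_const continuousOn_id fun s hs => Or.inl ?_)
    rw [uIcc_of_le (by linarith)] at hs
    exact (show 0 < s by linarith [hs.1]).ne'
  exact hleft.trans hright

end Beta

section FractionalIntegral

variable {γ β α t : ℝ}

theorem setIntegral_rpow_mul_sub_rpow_mul_rpow_pow (hγ : 0 < γ) (hα : 0 < α) (hβ : 0 < β)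
    (ht : 0 < t) (j : ℕ) :
    ∫ s in Ioc 0 t, s ^ (β - 1) * (t - s) ^ (α - 1) * (s ^ γ) ^ j
      = Real.Gamma (γ * j + β) * Real.Gamma α / Real.Gamma (γ * j + (β + α))
        * (t ^ (β + α - 1) * (t ^ γ) ^ j) := by
  have hpow : ∀ p s : ℝ, 0 < s → s ^ (p - 1) * (s ^ γ) ^ j = s ^ (γ * j + p - 1) :=
    fun p s hs => by
      rw [← Real.rpow_natCast, ← Real.rpow_mul hs.le, ← Real.rpow_add hs]
      ring_nf
  rw [setIntegral_congr_fun measurableSet_Ioc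
      (g := fun s => s ^ (γ * j + β - 1) * (t - s) ^ (α - 1)) fun s hs => by
        dsimp only; rw [← hpow β s hs.1]; ring,
    ← intervalIntegral.integral_of_le ht.le,
    integral_rpow_mul_sub_rpow (by positivity) hα ht, hpow (β + α) t ht, add_assoc]

theorem integral_rpow_mul_sub_rpow_mul_mittagLeffler (hγ : 0 < γ) (hα : 0 < α) (hβ : 0 < β)
    (ht : 0 < t) :
    ∫ s in (0 : ℝ)..t, s ^ (β - 1) * (t - s) ^ (α - 1) * mittagLeffler γ β (-(s ^ γ))
      = Real.Gamma α * (t ^ (β + α - 1) * mittagLeffler γ (β + α) (-(t ^ γ))) := by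
  set G : ℕ → ℝ → ℝ := fun j s => s ^ (β - 1) * (t - s) ^ (α - 1) * (s ^ γ) ^ j
  have hΓ : ∀ j : ℕ, 0 < Real.Gamma (γ * j + β) := fun j => Real.Gamma_pos_of_pos (by positivity)
  have hG_int : ∀ j : ℕ, IntegrableOn (G j) (Ioc 0 t) := fun j =>
    ((intervalIntegrable_rpow_mul_sub_rpow (u := γ * j + β) (by positivity) hα ht).1).congr_fun
      (fun s hs => by
        simp only [G]
        rw [mul_right_comm, ← Real.rpow_natCast, ← Real.rpow_mul hs.1.le, ← Real.rpow_add hs.1]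
        ring_nf) measurableSet_Ioc
  have hterm : ∀ (j : ℕ) (s : ℝ),
      s ^ (β - 1) * (t - s) ^ (α - 1) * ((-(s ^ γ)) ^ j / Real.Gamma (γ * j + β))
      = (-1) ^ j / Real.Gamma (γ * j + β) * G j s := fun j s => by
    simp only [G]; rw [neg_pow]; ring
  have hnorm : ∀ j : ℕ, ∀ s ∈ Ioc 0 t, ‖(-1) ^ j / Real.Gamma (γ * j + β) * G j s‖
      = 1 / Real.Gamma (γ * j + β) * G j s := fun j s hs => by
    have : 0 ≤ G j s := by
      have := hs.1.le; have := hs.2; simp only [G]; positivity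
    rw [norm_mul, norm_div, norm_pow, norm_neg, norm_one, one_pow,
      Real.norm_of_nonneg (hΓ j).le, Real.norm_of_nonneg this]
  have hsum := integral_tsum_of_summable_integral_norm
    (μ := volume.restrict (Ioc 0 t)) (fun j => (hG_int j).const_mul ((-1) ^ j / _)) <| by
      refine ((summable_pow_div_Gamma_mul_add (β := β + α) hγ (by linarith) (t ^ γ)).mul_left
        (Real.Gamma α * t ^ (β + α - 1))).congr fun j => Eq.symm ?_
      rw [setIntegral_congr_fun measurableSet_Ioc (hnorm j), MeasureTheory.integral_const_mul,
        setIntegral_rpow_mul_sub_rpow_mul_rpow_pow hγ hα hβ ht]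
      field_simp [(hΓ j).ne']
  rw [intervalIntegral.integral_of_le ht.le]
  simp only [mittagLeffler, ← tsum_mul_left, hterm, ← hsum]
  refine tsum_congr fun j => ?_
  rw [MeasureTheory.integral_const_mul, setIntegral_rpow_mul_sub_rpow_mul_rpow_pow hγ hα hβ ht,
    neg_pow (t ^ γ)]
  field_simp [(hΓ j).ne']

end FractionalIntegral

theorem exists_mem_Ioo_intervalIntegral_lt {f : ℝ → ℝ} {a b ε : ℝ} (hab : a < b)
    (hf : IntervalIntegrable f volume a b) (hε : 0 < ε) :
    ∃ x ∈ Ioo a b, ∫ t in x..b, f t < ε := by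
  have hcont := intervalIntegral.continuousOn_primitive_interval' hf right_mem_uIcc b
    right_mem_uIcc
  rw [uIcc_of_le hab.le, ContinuousWithinAt, intervalIntegral.integral_same] at hcont
  have hlt := ((hcont.mono_left (nhdsWithin_le_of_mem (Icc_mem_nhdsLT hab))).eventually
    (lt_mem_nhds (neg_lt_zero.2 hε))).and (Ioo_mem_nhdsLT hab)
  obtain ⟨x, hx, hxab⟩ := hlt.exists
  exact ⟨x, hxab, by rw [intervalIntegral.integral_symm]; linarith⟩

theorem Real.antitoneOn_rpow_one_sub_mul_sub_rpow {γ s : ℝ} (hγ : γ ≤ 1) (hs : 0 ≤ s) :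
    AntitoneOn (fun b => b ^ (1 - γ) * (b - s) ^ (γ - 1)) (Ioi s) := by
  have hform : ∀ b ∈ Ioi s, b ^ (1 - γ) * (b - s) ^ (γ - 1) = ((b - s) / b) ^ (γ - 1) := by
    intro b hb
    have hb0 : 0 < b := hs.trans_lt hb
    rw [Real.div_rpow (sub_pos.2 hb).le hb0.le, show 1 - γ = -(γ - 1) by ring,
      Real.rpow_neg hb0.le, inv_mul_eq_div]
  intro b₁ hb₁ b₂ hb₂ hb
  have hb₁0 : 0 < b₁ := hs.trans_lt hb₁
  dsimp only
  rw [hform b₁ hb₁, hform b₂ hb₂]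
  refine Real.rpow_le_rpow_of_nonpos (div_pos (sub_pos.2 hb₁) hb₁0) ?_ (by linarith)
  rw [div_le_div_iff₀ hb₁0 (hb₁0.trans_le hb)]
  nlinarith

section Volterra

variable {γ c : ℝ} {h : ℝ → ℝ}

theorem intervalIntegrable_rpow_mul_sub_rpow_mul (hγ : 0 < γ) (hh : Continuous h) {t : ℝ}
    (ht : 0 < t) :
    IntervalIntegrable (fun s => s ^ (γ - 1) * (t - s) ^ (γ - 1) * h s) volume 0 t :=
  (intervalIntegrable_rpow_mul_sub_rpow hγ hγ ht).mul_continuousOn hh.continuousOn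

theorem mul_le_integral_of_volterra (hγ0 : 0 < γ) (hγ1 : γ ≤ 1) (hc : 0 ≤ c) (hh : Continuous h)
    (hV : ∀ τ, 0 < τ → c * h τ + τ ^ (1 - γ) *
      ∫ s in (0 : ℝ)..τ, s ^ (γ - 1) * (τ - s) ^ (γ - 1) * h s = 1)
    {τ t₀ : ℝ} (hτ : 0 < τ) (hτt₀ : τ < t₀) (hpos : ∀ s ∈ Ico 0 t₀, 0 ≤ h s)
    (hzero : h t₀ ≤ 0) :
    c * h τ ≤ t₀ ^ (1 - γ) * ∫ s in τ..t₀, s ^ (γ - 1) * (t₀ - s) ^ (γ - 1) * h s := by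
  have ht₀ : 0 < t₀ := hτ.trans hτt₀
  have hτmem : τ ∈ uIcc 0 t₀ := by rw [uIcc_of_le ht₀.le]; exact ⟨hτ.le, hτt₀.le⟩
  have hint := intervalIntegrable_rpow_mul_sub_rpow_mul hγ0 hh ht₀
  have hint₁ := hint.mono_set (uIcc_subset_uIcc left_mem_uIcc hτmem)
  have hsplit := intervalIntegral.integral_add_adjacent_intervals hint₁
    (hint.mono_set (uIcc_subset_uIcc hτmem right_mem_uIcc))
  -- the rescaled kernel `b ^ (1 - γ) * (b - s) ^ (γ - 1)` decreases in `b`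
  have hcomp : t₀ ^ (1 - γ) * ∫ s in (0 : ℝ)..τ, s ^ (γ - 1) * (t₀ - s) ^ (γ - 1) * h s
      ≤ τ ^ (1 - γ) * ∫ s in (0 : ℝ)..τ, s ^ (γ - 1) * (τ - s) ^ (γ - 1) * h s := by
    rw [← intervalIntegral.integral_const_mul, ← intervalIntegral.integral_const_mul]
    refine intervalIntegral.integral_mono_on_of_le_Ioo hτ.le (hint₁.const_mul _)
      ((intervalIntegrable_rpow_mul_sub_rpow_mul hγ0 hh hτ).const_mul _) fun s hs => ?_
    have hker := Real.antitoneOn_rpow_one_sub_mul_sub_rpow hγ1 hs.1.le hs.2 (hs.2.trans hτt₀)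
      hτt₀.le
    have := mul_le_mul_of_nonneg_right (mul_le_mul_of_nonneg_left hker
      (Real.rpow_nonneg hs.1.le (γ - 1))) (hpos s ⟨hs.1.le, hs.2.trans hτt₀⟩)
    dsimp only at this ⊢
    linarith
  have hV₀ := hV t₀ ht₀
  rw [← hsplit, mul_add] at hV₀
  linarith [hV τ hτ, mul_nonpos_of_nonneg_of_nonpos hc hzero]

theorem pos_of_volterra (hγ0 : 0 < γ) (hγ1 : γ ≤ 1) (hc : 0 < c) (hh : Continuous h)
    (h0 : 0 < h 0)
    (hV : ∀ τ, 0 < τ → c * h τ + τ ^ (1 - γ) *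
      ∫ s in (0 : ℝ)..τ, s ^ (γ - 1) * (τ - s) ^ (γ - 1) * h s = 1)
    {x : ℝ} (hx : 0 ≤ x) : 0 < h x := by
  by_contra hx'
  set S := {u | 0 ≤ u ∧ h u ≤ 0}
  have hSclosed : IsClosed S :=
    (isClosed_le continuous_const continuous_id).inter (isClosed_le hh continuous_const)
  have hbdd : BddBelow S := ⟨0, fun u hu => hu.1⟩
  obtain ⟨ht₀0, hzero⟩ : sInf S ∈ S := hSclosed.csInf_mem ⟨x, hx, not_lt.1 hx'⟩ hbdd
  set t₀ := sInf S
  have hpos : ∀ s ∈ Ico 0 t₀, 0 < h s := fun s hs =>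
    not_le.1 fun hle => (csInf_le hbdd ⟨hs.1, hle⟩).not_gt hs.2
  have ht₀ : 0 < t₀ := ht₀0.lt_of_ne fun he => by rw [← he] at hzero; linarith
  -- on `[t₁, t₀]` the kernel has mass `< c / 2`, which contradicts the bound of
  -- `mul_le_integral_of_volterra` at a maximum point of `h` there
  set K := fun s => t₀ ^ (1 - γ) * (s ^ (γ - 1) * (t₀ - s) ^ (γ - 1))
  have hK : IntervalIntegrable K volume 0 t₀ :=
    (intervalIntegrable_rpow_mul_sub_rpow hγ0 hγ0 ht₀).const_mul _
  obtain ⟨t₁, ht₁, htail⟩ := exists_mem_Ioo_intervalIntegral_lt ht₀ hK (half_pos hc)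
  obtain ⟨tm, htm, hmax⟩ :=
    isCompact_Icc.exists_isMaxOn (nonempty_Icc.2 ht₁.2.le) hh.continuousOn
  have hhm : 0 < h tm :=
    (hpos t₁ ⟨ht₁.1.le, ht₁.2⟩).trans_le (hmax (left_mem_Icc.2 ht₁.2.le))
  have htm₀ : tm < t₀ := htm.2.lt_of_ne fun he => by rw [he] at hhm; linarith
  have htm0 : 0 < tm := ht₁.1.trans_le htm.1
  have hsub : ∀ {a}, 0 ≤ a → a ≤ t₀ → uIcc a t₀ ⊆ uIcc 0 t₀ := fun ha hat =>
    uIcc_subset_uIcc ⟨by simp [ha], by simp [hat]⟩ right_mem_uIcc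
  have hKnonneg : ∀ s ∈ Icc t₁ t₀, 0 ≤ K s := fun s hs => by
    have := ht₁.1.trans_le hs.1; have := hs.2
    simp only [K]
    positivity
  have hbound : t₀ ^ (1 - γ) * ∫ s in tm..t₀, s ^ (γ - 1) * (t₀ - s) ^ (γ - 1) * h s
      ≤ (∫ s in t₁..t₀, K s) * h tm :=
    calc t₀ ^ (1 - γ) * ∫ s in tm..t₀, s ^ (γ - 1) * (t₀ - s) ^ (γ - 1) * h s
        = ∫ s in tm..t₀, K s * h s := by
          rw [← intervalIntegral.integral_const_mul]
          simp only [K, mul_assoc]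
      _ ≤ ∫ s in tm..t₀, K s * h tm :=
          intervalIntegral.integral_mono_on htm₀.le
            ((hK.mono_set (hsub htm0.le htm₀.le)).mul_continuousOn hh.continuousOn)
            ((hK.mono_set (hsub htm0.le htm₀.le)).mul_const _) fun s hs =>
              mul_le_mul_of_nonneg_left (hmax ⟨htm.1.trans hs.1, hs.2⟩)
                (hKnonneg s ⟨htm.1.trans hs.1, hs.2⟩)
      _ = (∫ s in tm..t₀, K s) * h tm := intervalIntegral.integral_mul_const _ _
      _ ≤ (∫ s in t₁..t₀, K s) * h tm := by
          refine mul_le_mul_of_nonneg_right (intervalIntegral.integral_mono_interval htm.1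
            htm₀.le le_rfl ?_ (hK.mono_set (hsub ht₁.1.le ht₁.2.le))) hhm.le
          filter_upwards [ae_restrict_mem measurableSet_Ioc] with s hs
          exact hKnonneg s (Ioc_subset_Icc_self hs)
  have hkm := mul_le_integral_of_volterra hγ0 hγ1 hc.le hh hV htm0 htm₀
    (fun s hs => (hpos s hs).le) hzero
  nlinarith [mul_lt_mul_of_pos_right htail hhm, mul_pos hc hhm]

end Volterra

section Relaxation

variable {γ : ℝ}

theorem continuous_mittagLeffler_neg_rpow (hγ : 0 < γ) {β : ℝ} (hβ : 0 < β) :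
    Continuous fun s : ℝ => mittagLeffler γ β (-(s ^ γ)) :=
  (continuous_mittagLeffler hγ hβ).comp (Real.continuous_rpow_const hγ.le).neg

theorem mittagLeffler_self_volterra (hγ : 0 < γ) {τ : ℝ} (hτ : 0 < τ) :
    Real.Gamma γ * mittagLeffler γ γ (-(τ ^ γ)) + τ ^ (1 - γ) *
      ∫ s in (0 : ℝ)..τ, s ^ (γ - 1) * (τ - s) ^ (γ - 1) * mittagLeffler γ γ (-(s ^ γ)) = 1 := by
  have hpow : τ ^ (1 - γ) * τ ^ (γ + γ - 1) = τ ^ γ := by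
    rw [← Real.rpow_add hτ]; ring_nf
  rw [integral_rpow_mul_sub_rpow_mul_mittagLeffler hγ hγ hγ hτ,
    mittagLeffler_eq_one_div_Gamma_add_mul hγ hγ (-(τ ^ γ))]
  rw [mul_add, mul_one_div_cancel (Real.Gamma_pos_of_pos hγ).ne']
  linear_combination Real.Gamma γ * mittagLeffler γ (γ + γ) (-(τ ^ γ)) * hpow

theorem mittagLeffler_self_neg_pos (hγ0 : 0 < γ) (hγ1 : γ ≤ 1) {x : ℝ} (hx : 0 ≤ x) :
    0 < mittagLeffler γ γ (-x) := by
  have hpos := pos_of_volterra hγ0 hγ1 (Real.Gamma_pos_of_pos hγ0)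
    (continuous_mittagLeffler_neg_rpow hγ0 hγ0)
    (by simpa [Real.zero_rpow hγ0.ne', mittagLeffler_zero] using Real.Gamma_pos_of_pos hγ0)
    (fun τ hτ => mittagLeffler_self_volterra hγ0 hτ) (Real.rpow_nonneg hx γ⁻¹)
  rwa [← Real.rpow_mul hx, inv_mul_cancel₀ hγ0.ne', Real.rpow_one] at hpos

theorem one_sub_mittagLeffler_neg_rpow_eq_integral (hγ : 0 < γ) {t : ℝ} (ht : 0 ≤ t) :
    1 - mittagLeffler γ 1 (-(t ^ γ))
      = ∫ s in (0 : ℝ)..t, s ^ (γ - 1) * mittagLeffler γ γ (-(s ^ γ)) := by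
  rcases ht.eq_or_lt with rfl | ht
  · simp [Real.zero_rpow hγ.ne', mittagLeffler_zero]
  have h := integral_rpow_mul_sub_rpow_mul_mittagLeffler hγ one_pos hγ ht
  simp only [sub_self, Real.rpow_zero, mul_one, Real.Gamma_one, one_mul,
    add_sub_cancel_right] at h
  rw [h, mittagLeffler_eq_one_div_Gamma_add_mul hγ one_pos, Real.Gamma_one, add_comm 1 γ]
  ring

theorem antitoneOn_mittagLeffler_neg_rpow (hγ0 : 0 < γ) (hγ1 : γ ≤ 1) :
    AntitoneOn (fun t => mittagLeffler γ 1 (-(t ^ γ))) (Ici 0) := by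
  intro a ha b hb hab
  have hint : ∀ u v : ℝ,
      IntervalIntegrable (fun s => s ^ (γ - 1) * mittagLeffler γ γ (-(s ^ γ))) volume u v :=
    fun u v => (intervalIntegral.intervalIntegrable_rpow' (by linarith)).mul_continuousOn
      (continuous_mittagLeffler_neg_rpow hγ0 hγ0).continuousOn
  have hsplit := intervalIntegral.integral_add_adjacent_intervals (hint 0 a) (hint a b)
  rw [← one_sub_mittagLeffler_neg_rpow_eq_integral hγ0 ha,
    ← one_sub_mittagLeffler_neg_rpow_eq_integral hγ0 hb] at hsplit
  have hnonneg : 0 ≤ ∫ s in a..b, s ^ (γ - 1) * mittagLeffler γ γ (-(s ^ γ)) :=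
    intervalIntegral.integral_nonneg hab fun s hs =>
      have hs0 : (0 : ℝ) ≤ s := le_trans ha hs.1
      mul_nonneg (Real.rpow_nonneg hs0 _)
        (mittagLeffler_self_neg_pos hγ0 hγ1 (Real.rpow_nonneg hs0 γ)).le
  dsimp only
  linarith

theorem mittagLeffler_neg_mul_le (hγ0 : 0 < γ) (hγ1 : γ ≤ 1) {x : ℝ} (hx : 0 < x) :
    mittagLeffler γ 1 (-x) * (Real.Gamma (1 + γ) + x) ≤ Real.Gamma (1 + γ) := by
  set t := x ^ γ⁻¹
  have ht : 0 < t := Real.rpow_pos_of_pos hx _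
  have htγ : t ^ γ = x := by
    rw [← Real.rpow_mul hx.le, inv_mul_cancel₀ hγ0.ne', Real.rpow_one]
  -- `E_{γ,1}(-s^γ)` decreases in `s`, so its Riemann–Liouville integral of order `γ` over
  -- `[0, t]` is at least its value at `t` times the mass of the kernel
  have hmono : Real.Gamma 1 * Real.Gamma γ / Real.Gamma (1 + γ) * t ^ (1 + γ - 1)
        * mittagLeffler γ 1 (-(t ^ γ))
      ≤ Real.Gamma γ * (t ^ (1 + γ - 1) * mittagLeffler γ (1 + γ) (-(t ^ γ))) := by
    have hker := intervalIntegrable_rpow_mul_sub_rpow one_pos hγ0 ht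
    rw [← integral_rpow_mul_sub_rpow one_pos hγ0 ht, ← intervalIntegral.integral_mul_const,
      ← integral_rpow_mul_sub_rpow_mul_mittagLeffler hγ0 hγ0 one_pos ht]
    refine intervalIntegral.integral_mono_on ht.le (hker.mul_const _)
      (hker.mul_continuousOn (continuous_mittagLeffler_neg_rpow hγ0 one_pos).continuousOn)
      fun s hs => mul_le_mul_of_nonneg_left
        (antitoneOn_mittagLeffler_neg_rpow hγ0 hγ1 hs.1 ht.le hs.2) ?_
    have := hs.1; have := hs.2
    positivity
  have hrec := mittagLeffler_eq_one_div_Gamma_add_mul hγ0 one_pos (-x)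
  have hΓ : Real.Gamma (1 + γ) = γ * Real.Gamma γ := by
    rw [add_comm, Real.Gamma_add_one hγ0.ne']
  have hΓγ := Real.Gamma_pos_of_pos hγ0
  simp only [add_sub_cancel_left, htγ, Real.Gamma_one, one_mul, hΓ] at hmono hrec ⊢
  field_simp at hmono hrec
  linear_combination x * hmono + γ * Real.Gamma γ * hrec

end Relaxation

/-- For `0 < γ < 1`, `T > 0` and every `s > 0`,
`s/(1 − E_{γ,1}(−s T^γ)) ≤ s + Γ(1+γ)/T^γ`. -/
theorem multiplier_bound (γ T : ℝ) (hγ0 : 0 < γ) (hγ1 : γ < 1) (hT : 0 < T) :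
    ∀ s : ℝ, 0 < s →
      s / (1 - mittagLeffler γ 1 (-(s * T ^ γ))) ≤ s + Real.Gamma (1 + γ) / T ^ γ := by
  intro s hs
  have hTγ : 0 < T ^ γ := Real.rpow_pos_of_pos hT γ
  have hx : 0 < s * T ^ γ := mul_pos hs hTγ
  have hE := mittagLeffler_neg_mul_le hγ0 hγ1.le hx
  have hE1 : 0 < 1 - mittagLeffler γ 1 (-(s * T ^ γ)) := by
    nlinarith [Real.Gamma_pos_of_pos (by linarith : 0 < 1 + γ)]
  have hsum : s + Real.Gamma (1 + γ) / T ^ γ = (s * T ^ γ + Real.Gamma (1 + γ)) / T ^ γ := by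
    field_simp
  rw [div_le_iff₀ hE1, hsum, div_mul_eq_mul_div, le_div_iff₀ hTγ]
  linarith
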